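/- Let f : ℝⁿ → ℝ be a C² function, and define W = √(1+‖∇f‖²), G(x) = Iₙ + ∇f(x) (∇f(x))ᵀ, A(x) = W(x)⁻¹ G(x)⁻¹ Hess f(x), and S(x) = (tr A(x))² − tr(A(x)²), the scalar curvature of the graph of f. If S is a constant function on ℝⁿ, equal to s with s ≥ 0, then s = 0; that is, an entire graph over ℝⁿ of constant nonnegative scalar curvature has zero scalar curvature. -/

import Mathlib

/-!
The mean curvature `H = tr A` of the graph is the divergence of the field `∇f / W`, of norm at
most `1`. Since `G⁻¹` is positive definite and `Hess f` is symmetric, `tr (A²) ≥ 0`, so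
`s = S ≤ H²`. If `s > 0`, then `|H| ≥ √s` everywhere and, `ℝⁿ` being connected, `H` has a
constant sign. Integrating `H` over a cube of side `2R` gives at least `√s (2R)ⁿ`, while by the
divergence theorem the flux of a field bounded by `1` through its boundary is at most
`2n (2R)ⁿ⁻¹`: a contradiction for large `R`.
-/

open MeasureTheory

/-- `W = √(1 + ‖∇f‖²)`. -/
noncomputable def Wgraph {n : ℕ} (f : EuclideanSpace ℝ (Fin n) → ℝ)
    (x : EuclideanSpace ℝ (Fin n)) : ℝ :=
  Real.sqrt (1 + ‖gradient f x‖ ^ 2)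

/-- The Hessian matrix of second partial derivatives of `f`. -/
noncomputable def hessMatrix {n : ℕ} (f : EuclideanSpace ℝ (Fin n) → ℝ)
    (x : EuclideanSpace ℝ (Fin n)) : Matrix (Fin n) (Fin n) ℝ :=
  Matrix.of fun i j =>
    iteratedFDeriv ℝ 2 f x ![EuclideanSpace.single i 1, EuclideanSpace.single j 1]

/-- The induced metric `G = Iₙ + ∇f (∇f)ᵀ` of the graph of `f` in graph coordinates. -/
noncomputable def metricMatrix {n : ℕ} (f : EuclideanSpace ℝ (Fin n) → ℝ)
    (x : EuclideanSpace ℝ (Fin n)) : Matrix (Fin n) (Fin n) ℝ :=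
  1 + Matrix.of fun i j => gradient f x i * gradient f x j

/-- The shape operator `A = W⁻¹ G⁻¹ Hess f` of the graph of `f`. -/
noncomputable def shapeOp {n : ℕ} (f : EuclideanSpace ℝ (Fin n) → ℝ)
    (x : EuclideanSpace ℝ (Fin n)) : Matrix (Fin n) (Fin n) ℝ :=
  (Wgraph f x)⁻¹ • ((metricMatrix f x)⁻¹ * hessMatrix f x)

/-- The scalar curvature `S = (tr A)² − tr(A²)` of the graph of `f` in `ℝⁿ⁺¹`. -/
noncomputable def scalCurvGraph {n : ℕ} (f : EuclideanSpace ℝ (Fin n) → ℝ)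
    (x : EuclideanSpace ℝ (Fin n)) : ℝ :=
  (shapeOp f x).trace ^ 2 - (shapeOp f x * shapeOp f x).trace

namespace Matrix

variable {m : Type*} [Fintype m] [DecidableEq m]

theorem inv_one_add_vecMulVec_self {K : Type*} [Field K] (v : m → K) (hv : 1 + v ⬝ᵥ v ≠ 0) :
    (1 + vecMulVec v v)⁻¹ = 1 - (1 + v ⬝ᵥ v)⁻¹ • vecMulVec v v := by
  refine inv_eq_right_inv ?_
  rw [add_mul, one_mul, mul_sub, mul_one, Matrix.mul_smul, vecMulVec_mul_vecMulVec, vecMulVec_smul]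
  linear_combination (norm := module) -(inv_mul_cancel₀ hv • vecMulVec v v)

theorem posDef_one_add_vecMulVec_self (v : m → ℝ) : (1 + vecMulVec v v).PosDef := by
  simpa using PosDef.one.add_posSemidef (posSemidef_vecMulVec_self_star v)

open scoped MatrixOrder in
theorem PosSemidef.trace_mul_mul_mul_nonneg {P H : Matrix m m ℝ} (hP : P.PosSemidef)
    (hH : H.IsHermitian) : 0 ≤ (P * H * (P * H)).trace := by
  obtain ⟨R, rfl⟩ := CStarAlgebra.nonneg_iff_eq_star_mul_self.mp hP.nonneg
  -- the trace is cyclically that of `K²` for the Hermitian `K = R H Rᴴ`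
  have hK : (R * H * Rᴴ)ᴴ = R * H * Rᴴ := by
    rw [conjTranspose_mul, conjTranspose_mul, conjTranspose_conjTranspose, hH.eq, Matrix.mul_assoc]
  calc (0 : ℝ) ≤ ((R * H * Rᴴ)ᴴ * (R * H * Rᴴ)).trace :=
        (posSemidef_conjTranspose_mul_self _).trace_nonneg
    _ = _ := by
      rw [hK, star_eq_conjTranspose]
      simp only [Matrix.mul_assoc]
      rw [trace_mul_comm Rᴴ]
      simp only [Matrix.mul_assoc]

end Matrix

section Cube

open Set

theorem measureReal_Icc_cube {ι : Type*} [Fintype ι] {R : ℝ} (hR : 0 ≤ R) :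
    volume.real (Icc (fun _ : ι => -R) fun _ => R) = (2 * R) ^ Fintype.card ι := by
  rw [measureReal_def, Real.volume_Icc_pi_toReal fun _ => by linarith]
  simp [two_mul]

variable {m : ℕ} {X : Fin (m + 1) → (Fin (m + 1) → ℝ) → ℝ}
  {X' : Fin (m + 1) → (Fin (m + 1) → ℝ) → (Fin (m + 1) → ℝ) →L[ℝ] ℝ} {M : ℝ}

theorem setIntegral_divergence_cube_le {R : ℝ} (hX : ∀ i x, HasFDerivAt (X i) (X' i x) x)
    (hXb : ∀ i x, |X i x| ≤ M) (hdiv : Continuous fun x => ∑ i, X' i x (Pi.single i 1))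
    (hR : 0 ≤ R) :
    ∫ x in Icc (fun _ => -R) (fun _ => R), ∑ i, X' i x (Pi.single i 1) ≤
      (m + 1) * (2 * M * (2 * R) ^ m) := by
  have hle : (fun _ : Fin (m + 1) => -R) ≤ fun _ => R := fun _ => by linarith
  rw [integral_divergence_of_hasFDerivAt_off_countable' _ _ hle X X' ∅ countable_empty
    (fun i => (continuous_iff_continuousAt.2 fun x => (hX i x).continuousAt).continuousOn)
    (fun x _ i => hX i x) (hdiv.continuousOn.integrableOn_compact isCompact_Icc)]
  have hface : ∀ (i : Fin (m + 1)) (g : (Fin m → ℝ) → Fin (m + 1) → ℝ),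
      |∫ y in Icc (fun _ => -R) (fun _ => R), X i (g y)| ≤ M * (2 * R) ^ m := by
    intro i g
    simpa [measureReal_Icc_cube hR] using norm_setIntegral_le_of_norm_le_const
      (μ := volume) (s := Icc (fun _ : Fin m => -R) fun _ => R)
      isCompact_Icc.measure_lt_top fun y _ => (Real.norm_eq_abs _).le.trans (hXb i (g y))
  calc _ ≤ ∑ _i : Fin (m + 1), 2 * M * (2 * R) ^ m := by
        refine Finset.sum_le_sum fun i _ => ?_
        have h₁ := abs_le.1 (hface i fun y => i.insertNth R y)
        have h₂ := abs_le.1 (hface i fun y => i.insertNth (-R) y)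
        simp only [Function.comp_def]
        linarith [h₁.2, h₂.1]
    _ = _ := by simp

theorem exists_sum_fderiv_single_lt {c : ℝ} (hX : ∀ i x, HasFDerivAt (X i) (X' i x) x)
    (hXb : ∀ i x, |X i x| ≤ M)
    (hdiv : Continuous fun x => ∑ i, X' i x (Pi.single i 1)) (hc : 0 < c) :
    ∃ x, ∑ i, X' i x (Pi.single i 1) < c := by
  by_contra! h
  have hM : 0 ≤ M := (abs_nonneg _).trans (hXb 0 0)
  -- `c R > (m + 1) M`: the volume term `c (2R)ᵐ⁺¹` beats the flux bound `2 (m + 1) M (2R)ᵐ`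
  set R := (m + 1) * M / c + 1 with hR
  have hR₀ : 0 < R := by positivity
  have hcR : c * R = (m + 1) * M + c := by
    rw [hR]
    field_simp
  have hlow : c * (2 * R) ^ (m + 1) ≤
      ∫ x in Icc (fun _ => -R) (fun _ => R), ∑ i, X' i x (Pi.single i 1) := by
    simpa [measureReal_Icc_cube hR₀.le, mul_comm] using
      setIntegral_ge_of_const_le (μ := volume) (s := Icc (fun _ => -R) fun _ => R)
        measurableSet_Icc isCompact_Icc.measure_lt_top.ne (fun x _ => h x)
        (hdiv.continuousOn.integrableOn_compact isCompact_Icc)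
  have hup := setIntegral_divergence_cube_le hX hXb hdiv hR₀.le
  have hkey : c * R * (2 * (2 * R) ^ m) ≤ (m + 1) * M * (2 * (2 * R) ^ m) := by
    linarith [show c * (2 * R) ^ (m + 1) = c * R * (2 * (2 * R) ^ m) by ring]
  have := le_of_mul_le_mul_right hkey (by positivity)
  linarith

end Cube

section Divergence

variable {n : ℕ}

noncomputable def divergence (X : EuclideanSpace ℝ (Fin n) → EuclideanSpace ℝ (Fin n))
    (x : EuclideanSpace ℝ (Fin n)) : ℝ :=
  ∑ i, fderiv ℝ (fun y => X y i) x (EuclideanSpace.single i 1)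

theorem divergence_neg (X : EuclideanSpace ℝ (Fin n) → EuclideanSpace ℝ (Fin n))
    (x : EuclideanSpace ℝ (Fin n)) : divergence (fun y => -X y) x = -divergence X x := by
  simp [divergence, fderiv_fun_neg]

theorem continuous_divergence {X : EuclideanSpace ℝ (Fin n) → EuclideanSpace ℝ (Fin n)}
    (hX : ContDiff ℝ 1 X) : Continuous (divergence X) :=
  continuous_finsetSum _ fun i _ =>
    ((contDiff_euclidean.1 hX i).continuous_fderiv one_ne_zero).clm_apply continuous_const

theorem exists_divergence_lt {X : EuclideanSpace ℝ (Fin n) → EuclideanSpace ℝ (Fin n)}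
    {M c : ℝ} (hX : ContDiff ℝ 1 X) (hXb : ∀ x, ‖X x‖ ≤ M) (hc : 0 < c) :
    ∃ x, divergence X x < c := by
  cases n with
  | zero => exact ⟨0, by simpa [divergence] using hc⟩
  | succ m =>
    let e := EuclideanSpace.equiv (Fin (m + 1)) ℝ
    obtain ⟨y, hy⟩ := exists_sum_fderiv_single_lt (M := M)
      (X := fun i y => X (e.symm y) i)
      (X' := fun i y => (fderiv ℝ (fun z => X z i) (e.symm y)).comp
        (e.symm : (Fin (m + 1) → ℝ) →L[ℝ] EuclideanSpace ℝ (Fin (m + 1))))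
      (fun i y => (((contDiff_euclidean.1 hX i).differentiable one_ne_zero _).hasFDerivAt).comp
        y e.symm.hasFDerivAt)
      (fun i y => (PiLp.norm_apply_le _ i).trans (hXb _))
      ((continuous_divergence hX).comp e.symm.continuous) hc
    exact ⟨e.symm y, hy⟩

theorem exists_abs_divergence_lt {X : EuclideanSpace ℝ (Fin n) → EuclideanSpace ℝ (Fin n)}
    {M c : ℝ} (hX : ContDiff ℝ 1 X) (hXb : ∀ x, ‖X x‖ ≤ M) (hc : 0 < c) :
    ∃ x, |divergence X x| < c := by
  by_contra! h
  have hcont := continuous_divergence hX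
  rcases isPreconnected_univ.eq_or_eq_neg_of_sq_eq hcont.continuousOn hcont.abs.continuousOn
      (fun x _ => (sq_abs _).symm) (fun {x} _ => (hc.trans_le (h x)).ne') with hpos | hneg
  · obtain ⟨x, hx⟩ := exists_divergence_lt hX hXb hc
    linarith [h x, show divergence X x = |divergence X x| from hpos (Set.mem_univ x)]
  · obtain ⟨x, hx⟩ :=
      exists_divergence_lt hX.neg (fun x => (norm_neg (X x)).trans_le (hXb x)) hc
    rw [divergence_neg] at hx
    linarith [h x, show divergence X x = -|divergence X x| from hneg (Set.mem_univ x)]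

end Divergence

section Graph

open Matrix

variable {n : ℕ} {f : EuclideanSpace ℝ (Fin n) → ℝ}

theorem Wgraph_sq (x : EuclideanSpace ℝ (Fin n)) :
    Wgraph f x ^ 2 = 1 + (gradient f x).ofLp ⬝ᵥ (gradient f x).ofLp := by
  rw [Wgraph, Real.sq_sqrt (by positivity), EuclideanSpace.norm_sq_eq]
  simp [dotProduct, sq]

theorem Wgraph_pos (x : EuclideanSpace ℝ (Fin n)) : 0 < Wgraph f x :=
  Real.sqrt_pos.2 (by positivity)

theorem metricMatrix_inv (x : EuclideanSpace ℝ (Fin n)) :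
    (metricMatrix f x)⁻¹ =
      1 - (Wgraph f x ^ 2)⁻¹ • vecMulVec (gradient f x).ofLp (gradient f x).ofLp := by
  rw [Wgraph_sq]
  exact inv_one_add_vecMulVec_self _ (by rw [← Wgraph_sq]; exact (pow_pos (Wgraph_pos x) 2).ne')

theorem trace_shapeOp (x : EuclideanSpace ℝ (Fin n)) :
    (shapeOp f x).trace = (Wgraph f x)⁻¹ * ((hessMatrix f x).trace - (Wgraph f x ^ 2)⁻¹ *
      ((gradient f x).ofLp ᵥ* hessMatrix f x ⬝ᵥ (gradient f x).ofLp)) := by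
  rw [shapeOp, trace_smul, metricMatrix_inv, sub_mul, one_mul, smul_mul, vecMulVec_mul,
    trace_sub, trace_smul, trace_vecMulVec, dotProduct_comm, smul_eq_mul, smul_eq_mul]

theorem hessMatrix_apply (x : EuclideanSpace ℝ (Fin n)) (i j : Fin n) :
    hessMatrix f x i j =
      fderiv ℝ (fderiv ℝ f) x (EuclideanSpace.single i 1) (EuclideanSpace.single j 1) := by
  simp [hessMatrix, iteratedFDeriv_two_apply]

theorem hessMatrix_isHermitian (hf : ContDiff ℝ 2 f) (x : EuclideanSpace ℝ (Fin n)) :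
    (hessMatrix f x).IsHermitian := by
  ext i j
  simp only [conjTranspose_apply, star_trivial, hessMatrix_apply]
  exact (hf.contDiffAt.isSymmSndFDerivAt (by simp)) _ _

theorem scalCurvGraph_le_trace_shapeOp_sq (hf : ContDiff ℝ 2 f) (x : EuclideanSpace ℝ (Fin n)) :
    scalCurvGraph f x ≤ (shapeOp f x).trace ^ 2 := by
  have hA : shapeOp f x * shapeOp f x = (Wgraph f x ^ 2)⁻¹ •
      ((metricMatrix f x)⁻¹ * hessMatrix f x * ((metricMatrix f x)⁻¹ * hessMatrix f x)) := by
    rw [shapeOp, smul_mul, Matrix.mul_smul, smul_smul, ← mul_inv, sq]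
  have hG : (metricMatrix f x)⁻¹.PosSemidef :=
    (posDef_one_add_vecMulVec_self (gradient f x).ofLp).inv.posSemidef
  have := hG.trace_mul_mul_mul_nonneg (hessMatrix_isHermitian hf x)
  rw [scalCurvGraph, hA, trace_smul, smul_eq_mul, sub_le_self_iff]
  positivity

noncomputable def normalizedGradient (f : EuclideanSpace ℝ (Fin n) → ℝ)
    (x : EuclideanSpace ℝ (Fin n)) : EuclideanSpace ℝ (Fin n) :=
  (Wgraph f x)⁻¹ • gradient f x

theorem norm_normalizedGradient_le_one (x : EuclideanSpace ℝ (Fin n)) :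
    ‖normalizedGradient f x‖ ≤ 1 := by
  have hW := Wgraph_pos (f := f) x
  rw [normalizedGradient, norm_smul, norm_inv, Real.norm_of_nonneg hW.le, inv_mul_le_one₀ hW]
  exact Real.le_sqrt_of_sq_le (by linarith)

theorem gradient_apply (x : EuclideanSpace ℝ (Fin n)) (i : Fin n) :
    gradient f x i = fderiv ℝ f x (EuclideanSpace.single i 1) := by
  rw [← (InnerProductSpace.toDual ℝ _).apply_symm_apply (fderiv ℝ f x),
    InnerProductSpace.toDual_apply_apply, EuclideanSpace.inner_single_right]
  simp [gradient]

theorem contDiff_gradient (hf : ContDiff ℝ 2 f) : ContDiff ℝ 1 (gradient f) := by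
  refine contDiff_euclidean.2 fun i => ?_
  simp only [gradient_apply]
  exact (hf.fderiv_right (m := 1) le_rfl).clm_apply contDiff_const

theorem contDiff_Wgraph (hf : ContDiff ℝ 2 f) : ContDiff ℝ 1 (Wgraph f) :=
  (contDiff_const.add ((contDiff_gradient hf).norm_sq ℝ)).sqrt fun _ => by positivity

theorem contDiff_normalizedGradient (hf : ContDiff ℝ 2 f) :
    ContDiff ℝ 1 (normalizedGradient f) :=
  ((contDiff_Wgraph hf).inv fun x => (Wgraph_pos x).ne').smul (contDiff_gradient hf)

theorem hasFDerivAt_gradient_apply (hf : ContDiff ℝ 2 f) (x : EuclideanSpace ℝ (Fin n))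
    (i : Fin n) : HasFDerivAt (fun y => gradient f y i)
      ((fderiv ℝ (fderiv ℝ f) x).flip (EuclideanSpace.single i 1)) x := by
  simp only [gradient_apply]
  exact (ContinuousLinearMap.apply ℝ ℝ _).hasFDerivAt.comp x
    ((hf.fderiv_right (m := 1) le_rfl).differentiable one_ne_zero x).hasFDerivAt

theorem hasFDerivAt_Wgraph (hf : ContDiff ℝ 2 f) (x : EuclideanSpace ℝ (Fin n)) :
    HasFDerivAt (Wgraph f) ((Wgraph f x)⁻¹ • ∑ j, gradient f x j •
      (fderiv ℝ (fderiv ℝ f) x).flip (EuclideanSpace.single j 1)) x := by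
  have hq : HasFDerivAt (fun y => 1 + ∑ j, gradient f y j ^ 2)
      (∑ j, (2 * gradient f x j) •
        (fderiv ℝ (fderiv ℝ f) x).flip (EuclideanSpace.single j 1)) x := by
    refine (HasFDerivAt.fun_sum fun j _ => ?_).const_add 1
    simpa using (hasFDerivAt_gradient_apply hf x j).pow 2
  have hW : Wgraph f = fun y => √(1 + ∑ j, gradient f y j ^ 2) := by
    ext y
    rw [Wgraph, EuclideanSpace.norm_sq_eq]
    simp
  refine (hW ▸ hq.sqrt (by positivity)).congr_fderiv ?_
  rw [hW, Finset.smul_sum, Finset.smul_sum]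
  refine Finset.sum_congr rfl fun j _ => ?_
  rw [smul_smul, smul_smul]
  field_simp

theorem fderiv_normalizedGradient_apply_single (hf : ContDiff ℝ 2 f)
    (x : EuclideanSpace ℝ (Fin n)) (i k : Fin n) :
    fderiv ℝ (fun y => normalizedGradient f y i) x (EuclideanSpace.single k 1) =
      (Wgraph f x)⁻¹ * hessMatrix f x k i -
        (Wgraph f x ^ 3)⁻¹ * gradient f x i * ∑ j, gradient f x j * hessMatrix f x k j := by
  have hWinv := (hasDerivAt_inv (Wgraph_pos x).ne').comp_hasFDerivAt x (hasFDerivAt_Wgraph hf x)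
  have hX : (fun y => normalizedGradient f y i) = fun y => (Wgraph f y)⁻¹ * gradient f y i := by
    ext y
    simp [normalizedGradient]
  have hD : HasFDerivAt (fun y => (Wgraph f y)⁻¹ * gradient f y i) _ x :=
    hWinv.mul (hasFDerivAt_gradient_apply hf x i)
  rw [hX, hD.fderiv]
  simp only [Function.comp_apply, neg_smul, smul_neg, _root_.add_apply, _root_.smul_apply,
    ContinuousLinearMap.flip_apply, smul_eq_mul, _root_.neg_apply, _root_.sum_apply, Finset.mul_sum,
    hessMatrix_apply]
  field_simp
  ring

theorem divergence_normalizedGradient (hf : ContDiff ℝ 2 f) (x : EuclideanSpace ℝ (Fin n)) :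
    divergence (normalizedGradient f) x = (shapeOp f x).trace := by
  rw [trace_shapeOp]
  simp only [divergence, fderiv_normalizedGradient_apply_single hf,
    Finset.sum_sub_distrib, trace, diag, vecMul, dotProduct, Finset.mul_sum, Finset.sum_mul]
  rw [mul_sub, Finset.mul_sum, Finset.mul_sum, Finset.sum_comm]
  congr 1
  refine Finset.sum_congr rfl fun i _ => ?_
  rw [Finset.mul_sum]
  refine Finset.sum_congr rfl fun j _ => ?_
  ring

end Graph

/-- An entire graph over `ℝⁿ` of constant nonnegative scalar curvature has zero
scalar curvature (final assertion of Corollary 1.8 of the paper with `M = ℝⁿ`). -/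
theorem stmt6 {n : ℕ} (f : EuclideanSpace ℝ (Fin n) → ℝ) (hf : ContDiff ℝ 2 f)
    (s : ℝ) (hs : 0 ≤ s) (hS : ∀ x, scalCurvGraph f x = s) : s = 0 := by
  by_contra hne
  have hspos : 0 < s := lt_of_le_of_ne hs (Ne.symm hne)
  obtain ⟨x, hx⟩ := exists_abs_divergence_lt (contDiff_normalizedGradient hf)
    norm_normalizedGradient_le_one (Real.sqrt_pos.2 hspos)
  rw [divergence_normalizedGradient hf, ← Real.sqrt_sq_eq_abs,
    Real.sqrt_lt_sqrt_iff (sq_nonneg _)] at hx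
  linarith [scalCurvGraph_le_trace_shapeOp_sq hf x, hS x]
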